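/- Let x ∈ ℝⁿ and let r : {1,…,n} → {1,…,L} be a categorical covariate with all group counts n_ℓ = #{i : r(i) = ℓ} positive; let Z ∈ ℝ^{n×L} be its indicator matrix, H_Z the orthogonal projection of ℝⁿ onto the column span of Z, and D_x = diag(x). Then for every ℓ = 1,…,L, the ℓ-th entry of the row vector xᵀ (I − H_Z) D_x Z equals n_ℓ σ̂²_{x[ℓ]}, where σ̂²_{x[ℓ]} = n_ℓ^{-1} ∑_{i : r(i)=ℓ} x_i² − (n_ℓ^{-1} ∑_{i : r(i)=ℓ} x_i)². Consequently, if the group sample variances are all equal to a common value σ̂², then xᵀ (I − H_Z) D_x Z = n σ̂² π̂ᵀ, where π̂ = (n_1/n,…,n_L/n). -/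

import Mathlib

/-! Since `Zᵀ Z = diag(n_ℓ)`, the hat matrix `H_Z` replaces each `x_i` by the mean of its group,
so `xᵀ (I − H_Z) = (x − x̄_{r(·)})ᵀ`. Multiplying by `D_x Z` sums `(x_i − x̄_ℓ) x_i` over group `ℓ`,
which is the centred sum of squares `n_ℓ σ̂²_{x[ℓ]}`. -/

open Finset Matrix

noncomputable section

/-- The indicator matrix `Z ∈ ℝ^{n×L}` of a categorical covariate `r`. -/
def indicatorMatrix {n L : ℕ} (r : Fin n → Fin L) : Matrix (Fin n) (Fin L) ℝ :=
  Matrix.of fun i ℓ => if r i = ℓ then 1 else 0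

/-- The (scaled) sample variance of `x` within group `ℓ` of the categorical covariate `r`. -/
def groupVar {n L : ℕ} (x : Fin n → ℝ) (r : Fin n → Fin L) (ℓ : Fin L) : ℝ :=
  (∑ i ∈ univ.filter (fun i : Fin n => r i = ℓ), x i ^ 2) /
      ((univ.filter (fun i : Fin n => r i = ℓ)).card : ℝ) -
    ((∑ i ∈ univ.filter (fun i : Fin n => r i = ℓ), x i) /
      ((univ.filter (fun i : Fin n => r i = ℓ)).card : ℝ)) ^ 2

theorem sum_sub_mean_mul_self {ι : Type*} (s : Finset ι) (f : ι → ℝ) :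
    ∑ i ∈ s, (f i - (∑ j ∈ s, f j) / #s) * f i =
      #s * ((∑ i ∈ s, f i ^ 2) / #s - ((∑ i ∈ s, f i) / #s) ^ 2) := by
  rcases s.eq_empty_or_nonempty with rfl | hs
  · simp
  have hcard : (#s : ℝ) ≠ 0 := by exact_mod_cast hs.card_pos.ne'
  simp only [sub_mul, sum_sub_distrib, ← mul_sum]
  field_simp

section IndicatorMatrix

variable {n L : ℕ} (r : Fin n → Fin L)

def groupMean (x : Fin n → ℝ) (ℓ : Fin L) : ℝ :=
  (∑ i with r i = ℓ, x i) / #{i | r i = ℓ}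

theorem vecMul_indicatorMatrix_apply (v : Fin n → ℝ) (ℓ : Fin L) :
    (v ᵥ* indicatorMatrix r) ℓ = ∑ i with r i = ℓ, v i := by
  simp [indicatorMatrix, vecMul, dotProduct, sum_filter]

theorem indicatorMatrix_mulVec (w : Fin L → ℝ) : indicatorMatrix r *ᵥ w = w ∘ r := by
  ext i
  simp [indicatorMatrix, mulVec, dotProduct]

theorem transpose_indicatorMatrix_mul_self :
    (indicatorMatrix r)ᵀ * indicatorMatrix r =
      diagonal fun ℓ => (#{i | r i = ℓ} : ℝ) := by
  ext ℓ ℓ'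
  simp only [mul_apply, transpose_apply, indicatorMatrix, of_apply, diagonal_apply,
    ite_zero_mul_ite_zero, one_mul]
  split_ifs with h
  · subst h; simp [sum_boole]
  · exact sum_eq_zero fun i _ => if_neg fun hi => h (hi.1.symm.trans hi.2)

theorem inv_transpose_indicatorMatrix_mul_self
    (hcount : ∀ ℓ : Fin L, 0 < #{i | r i = ℓ}) :
    ((indicatorMatrix r)ᵀ * indicatorMatrix r)⁻¹ =
      diagonal fun ℓ => (#{i | r i = ℓ} : ℝ)⁻¹ := by
  refine inv_eq_right_inv ?_
  rw [transpose_indicatorMatrix_mul_self, diagonal_mul_diagonal, ← diagonal_one]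
  congr 1
  ext ℓ
  exact mul_inv_cancel₀ (Nat.cast_ne_zero.mpr (hcount ℓ).ne')

theorem vecMul_indicatorMatrix_hat (hcount : ∀ ℓ : Fin L, 0 < #{i | r i = ℓ})
    (x : Fin n → ℝ) :
    x ᵥ* (indicatorMatrix r * ((indicatorMatrix r)ᵀ * indicatorMatrix r)⁻¹ *
      (indicatorMatrix r)ᵀ) = groupMean r x ∘ r := by
  rw [inv_transpose_indicatorMatrix_mul_self r hcount, ← vecMul_vecMul, ← vecMul_vecMul,
    vecMul_transpose, indicatorMatrix_mulVec]
  ext i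
  simp only [Function.comp_apply, vecMul_diagonal, vecMul_indicatorMatrix_apply, groupMean,
    div_eq_mul_inv]

theorem vecMul_residual_interaction_apply (hcount : ∀ ℓ : Fin L, 0 < #{i | r i = ℓ})
    (x : Fin n → ℝ) (ℓ : Fin L) :
    (x ᵥ* ((1 - indicatorMatrix r * ((indicatorMatrix r)ᵀ * indicatorMatrix r)⁻¹ *
      (indicatorMatrix r)ᵀ) * (diagonal x * indicatorMatrix r))) ℓ =
      ∑ i with r i = ℓ, (x i - groupMean r x ℓ) * x i := by
  rw [← vecMul_vecMul, vecMul_sub, vecMul_one, vecMul_indicatorMatrix_hat r hcount,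
    ← vecMul_vecMul, vecMul_indicatorMatrix_apply]
  refine sum_congr rfl fun i hi => ?_
  rw [vecMul_diagonal, Pi.sub_apply, Function.comp_apply, (mem_filter.mp hi).2]

end IndicatorMatrix

/-- key identity for categorical-continuous interactions.  With
`Z` the indicator matrix of `r`, `H_Z = Z (Zᵀ Z)⁻¹ Zᵀ` the orthogonal projection onto
its column span, and `D_x = diag x`, the `ℓ`-th entry of the row vector
`xᵀ (I − H_Z) D_x Z` equals `n_ℓ σ̂²_{x[ℓ]}`; consequently, under the equal-variance
condition the row vector equals `n σ̂² π̂ᵀ`. -/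
theorem interaction_cross_product_identity
    {n L : ℕ} (x : Fin n → ℝ) (r : Fin n → Fin L)
    (hcount : ∀ ℓ : Fin L, 0 < (univ.filter (fun i : Fin n => r i = ℓ)).card) :
    (∀ ℓ : Fin L,
      Matrix.vecMul x
        ((1 - indicatorMatrix r *
            ((indicatorMatrix r)ᵀ * indicatorMatrix r)⁻¹ * (indicatorMatrix r)ᵀ) *
          (Matrix.diagonal x * indicatorMatrix r)) ℓ =
      ((univ.filter (fun i : Fin n => r i = ℓ)).card : ℝ) * groupVar x r ℓ) ∧
    (∀ σ2 : ℝ, (∀ ℓ : Fin L, groupVar x r ℓ = σ2) →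
      ∀ ℓ : Fin L,
        Matrix.vecMul x
          ((1 - indicatorMatrix r *
              ((indicatorMatrix r)ᵀ * indicatorMatrix r)⁻¹ * (indicatorMatrix r)ᵀ) *
            (Matrix.diagonal x * indicatorMatrix r)) ℓ =
        (n : ℝ) * σ2 *
          (((univ.filter (fun i : Fin n => r i = ℓ)).card : ℝ) / n)) := by
  have entry (ℓ : Fin L) := (vecMul_residual_interaction_apply r hcount x ℓ).trans
    (sum_sub_mean_mul_self _ x)
  refine ⟨entry, fun σ2 hvar ℓ => ?_⟩
  obtain ⟨i, -⟩ := card_pos.mp (hcount ℓ)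
  have hn : (n : ℝ) ≠ 0 := by exact_mod_cast i.pos.ne'
  rw [entry, ← groupVar, hvar]
  field_simp

end
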